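/- arXiv:2508.05955 — 5 statements merged into one kernel-verified Lean document; each statement's English description precedes it below -/
import Mathlib

section
/- Let n ≥ 1 and γ ∈ ℤ₊ⁿ be a multi-index such that the spherical integral ∫_{𝕊^{n-1}} ω^{2γ} dω is positive. Fix α > 0 and β > 0, and define W_c(t,x) as the inverse Fourier transform of ξ ↦ e^{-β|ξ|²} cos(tα|ξ|). Then, as t → ∞, ‖∂ₓ^γ W_c(t)‖_{L²(ℝⁿ)}² converges to 2^{-n/2 - |γ| - 2} Γ(n/2 + |γ|) β^{-n/2 - |γ|} ∫_{𝕊^{n-1}} ω^{2γ} dω. -/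
open MeasureTheory Metric Real

/-- The surface measure on the unit sphere in `ℝⁿ`. -/
noncomputable def sphereMeasure (n : ℕ) :
    Measure (sphere (0 : EuclideanSpace ℝ (Fin n)) 1) :=
  (volume : Measure (EuclideanSpace ℝ (Fin n))).toSphere

/-!
In polar coordinates `ξ = r • ω` the integrand factors into `ω ^ (2γ)`, integrated against the
surface measure of the sphere, times the radial integral
`∫₀^∞ r ^ (n - 1 + 2|γ|) e^{-2βr²} cos²(tαr) dr`. Writing `cos² = (1 + cos (2tαr)) / 2`, the
oscillating half tends to `0` by the Riemann–Lebesgue lemma, and the other half is a Gaussian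
moment, `½ (2β)^{-(n/2+|γ|)} ½ Γ(n/2 + |γ|)`.
-/

open Set Filter Topology

namespace MeasureTheory

theorem integral_volumeIoiPow (k : ℕ) (f : ℝ → ℝ) :
    ∫ r : Ioi (0 : ℝ), f r ∂Measure.volumeIoiPow k = ∫ r in Ioi 0, r ^ k * f r := by
  simp only [Measure.volumeIoiPow, ENNReal.ofReal]
  rw [integral_withDensity_eq_integral_smul (measurable_subtype_coe.pow_const _).real_toNNReal,
    integral_subtype_comap measurableSet_Ioi fun r ↦ (r ^ k).toNNReal • f r]
  refine setIntegral_congr_fun measurableSet_Ioi fun r hr ↦ ?_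
  rw [NNReal.smul_def, Real.coe_toNNReal _ (pow_nonneg hr.out.le _), smul_eq_mul]

variable {E : Type*} [NormedAddCommGroup E] [NormedSpace ℝ E] [MeasurableSpace E] [BorelSpace E]
  [FiniteDimensional ℝ E] [Nontrivial E] (μ : Measure E) [μ.IsAddHaarMeasure]

theorem integral_mul_fun_norm_of_homogeneous {P : E → ℝ} {d : ℕ}
    (hP : ∀ r : ℝ, 0 < r → ∀ x, P (r • x) = r ^ d * P x) (f : ℝ → ℝ) :
    ∫ x, P x * f ‖x‖ ∂μ =
      (∫ ω, P ω ∂μ.toSphere) * ∫ r in Ioi 0, r ^ (Module.finrank ℝ E - 1 + d) * f r := by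
  calc ∫ x, P x * f ‖x‖ ∂μ
      = ∫ x : ({0}ᶜ : Set E), P x * f ‖(x : E)‖ ∂μ.comap (↑) := by
        rw [integral_subtype_comap (measurableSet_singleton 0).compl fun x ↦ P x * f ‖x‖,
          restrict_compl_singleton]
    _ = ∫ p : sphere (0 : E) 1 × Ioi (0 : ℝ), P p.1 * ((p.2 : ℝ) ^ d * f p.2)
          ∂μ.toSphere.prod (.volumeIoiPow (Module.finrank ℝ E - 1)) := by
        rw [← μ.measurePreserving_homeomorphUnitSphereProd.integral_comp
          (Homeomorph.measurableEmbedding _)]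
        refine integral_congr_ae (.of_forall fun x ↦ ?_)
        have hx : 0 < ‖(x : E)‖ := norm_pos_iff.2 x.2
        have hPx : P x = ‖(x : E)‖ ^ d * P (‖(x : E)‖⁻¹ • x) := by
          rw [← hP _ hx, smul_inv_smul₀ hx.ne']
        simp only [homeomorphUnitSphereProd_apply_fst_coe, homeomorphUnitSphereProd_apply_snd_coe,
          hPx]
        ring
    _ = _ := by
        rw [integral_prod_mul (fun ω : sphere (0 : E) 1 ↦ P ω)
          fun r : Ioi (0 : ℝ) ↦ (r : ℝ) ^ d * f r, integral_volumeIoiPow _ fun r ↦ r ^ d * f r]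
        simp only [pow_add, mul_assoc]

end MeasureTheory

theorem EuclideanSpace.integral_prod_pow_mul_fun_norm {ι : Type*} [Fintype ι] [Nonempty ι]
    (k : ι → ℕ) (f : ℝ → ℝ) :
    ∫ ξ : EuclideanSpace ℝ ι, (∏ i, ξ i ^ k i) * f ‖ξ‖ =
      (∫ ω : sphere (0 : EuclideanSpace ℝ ι) 1, ∏ i, (ω : EuclideanSpace ℝ ι) i ^ k i
        ∂volume.toSphere) * ∫ r in Ioi 0, r ^ (Fintype.card ι - 1 + ∑ i, k i) * f r := by
  have hP (r : ℝ) (_ : 0 < r) (x : EuclideanSpace ℝ ι) :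
      ∏ i, (r • x) i ^ k i = r ^ (∑ i, k i) * ∏ i, x i ^ k i := by
    simp only [PiLp.smul_apply, smul_eq_mul, mul_pow, Finset.prod_mul_distrib,
      Finset.prod_pow_eq_pow_sum]
  simpa only [finrank_euclideanSpace] using integral_mul_fun_norm_of_homogeneous volume
    (P := fun ξ : EuclideanSpace ℝ ι ↦ ∏ i, ξ i ^ k i) hP f

theorem Real.tendsto_integral_cos_mul_mul_cocompact {g : ℝ → ℝ} (hg : Integrable g) :
    Tendsto (fun s : ℝ ↦ ∫ v, cos (s * v) * g v) (cocompact ℝ) (𝓝 0) := by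
  have hfreq : Tendsto (fun s : ℝ ↦ s * (2 * π)⁻¹) (cocompact ℝ) (cocompact ℝ) :=
    tendsto_cocompact_mul_right₀ (by positivity)
  have hRL := (Complex.continuous_re.tendsto 0).comp
    ((Real.tendsto_integral_exp_smul_cocompact fun v ↦ (g v : ℂ)).comp hfreq)
  rw [Complex.zero_re] at hRL
  refine hRL.congr fun s ↦ ?_
  have hint : Integrable fun v : ℝ ↦ Real.fourierChar (-(v * (s * (2 * π)⁻¹))) • (g v : ℂ) := by
    simpa [mul_comm] using (Real.fourierIntegral_convergent_iff (μ := volume)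
      (f := fun v ↦ (g v : ℂ)) (s * (2 * π)⁻¹)).2 hg.ofReal
  refine (integral_re hint).symm.trans (integral_congr_ae (.of_forall fun v ↦ ?_))
  change Complex.re _ = _
  rw [Circle.smul_def, Real.fourierChar_apply, smul_eq_mul, mul_comm, Complex.re_ofReal_mul,
    Complex.exp_ofReal_mul_I_re, mul_comm (g v), ← cos_neg]
  congr 2
  field_simp

theorem tendsto_setIntegral_mul_cos_sq_atTop {g : ℝ → ℝ} {s : Set ℝ} (hs : MeasurableSet s)
    (hg : IntegrableOn g s) :
    Tendsto (fun t : ℝ ↦ ∫ r in s, g r * cos (t * r) ^ 2) atTop (𝓝 ((1 / 2) * ∫ r in s, g r)) := by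
  have hosc : Tendsto (fun t : ℝ ↦ ∫ r in s, cos (2 * t * r) * g r) atTop (𝓝 0) := by
    have hcocompact : Tendsto (fun t : ℝ ↦ 2 * t) atTop (cocompact ℝ) :=
      (tendsto_id.const_mul_atTop two_pos).mono_right
        (cocompact_eq_atBot_atTop (α := ℝ) ▸ le_sup_right)
    refine ((Real.tendsto_integral_cos_mul_mul_cocompact
      ((integrable_indicator_iff hs).2 hg)).comp hcocompact).congr fun t ↦ ?_
    rw [Function.comp_apply, ← integral_indicator hs]
    simp only [indicator_mul_right]
  have hcos_int (t : ℝ) : IntegrableOn (fun r ↦ cos (2 * t * r) * g r) s :=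
    hg.bdd_mul (c := 1) (by fun_prop) (.of_forall fun r ↦ by simpa using abs_cos_le_one _)
  have hsplit (t : ℝ) : ∫ r in s, g r * cos (t * r) ^ 2 =
      (1 / 2) * (∫ r in s, g r) + (1 / 2) * ∫ r in s, cos (2 * t * r) * g r := by
    rw [← integral_const_mul, ← integral_const_mul, ← integral_add (hg.const_mul _)
      ((hcos_int t).const_mul _)]
    congr 1 with r
    rw [cos_sq, mul_assoc 2 t r]
    ring
  simpa only [hsplit, mul_zero, add_zero] using (hosc.const_mul (1 / 2)).const_add _

theorem integrableOn_pow_mul_exp_neg_mul_sq {b : ℝ} (hb : 0 < b) (m : ℕ) :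
    IntegrableOn (fun r : ℝ ↦ r ^ m * exp (-b * r ^ 2)) (Ioi 0) := by
  simpa using integrableOn_rpow_mul_exp_neg_mul_sq hb (s := m)
    (neg_one_lt_zero.trans_le m.cast_nonneg)

theorem integral_pow_mul_exp_neg_mul_sq {b : ℝ} (hb : 0 < b) (m : ℕ) :
    ∫ r in Ioi (0 : ℝ), r ^ m * exp (-b * r ^ 2) =
      b ^ (-((m : ℝ) + 1) / 2) * (1 / 2) * Gamma (((m : ℝ) + 1) / 2) := by
  simpa using integral_rpow_mul_exp_neg_mul_rpow two_pos (q := m)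
    (neg_one_lt_zero.trans_le m.cast_nonneg) hb

theorem Wc_deriv_L2_norm_sq_tendsto_general (n : ℕ) (hn : 1 ≤ n) (γ : Fin n → ℕ)
    (α β : ℝ) (hα : 0 < α) (hβ : 0 < β) :
    Filter.Tendsto
      (fun t : ℝ => ∫ ξ : EuclideanSpace ℝ (Fin n),
        (∏ i, (ξ i) ^ (2 * γ i)) * Real.exp (-2 * β * ‖ξ‖ ^ 2) *
          Real.cos (t * α * ‖ξ‖) ^ 2)
      Filter.atTop
      (nhds ((2 : ℝ) ^ (-(n : ℝ) / 2 - (∑ i, γ i : ℕ) - 2) *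
        Real.Gamma ((n : ℝ) / 2 + (∑ i, γ i : ℕ)) *
        β ^ (-(n : ℝ) / 2 - (∑ i, γ i : ℕ)) *
        ∫ ω : sphere (0 : EuclideanSpace ℝ (Fin n)) 1,
          (∏ i, ((ω : EuclideanSpace ℝ (Fin n)) i) ^ (2 * γ i)) ∂(sphereMeasure n))) := by
  have : Nonempty (Fin n) := Fin.pos_iff_nonempty.mp hn
  set M := ∑ i, γ i
  set S := ∫ ω : sphere (0 : EuclideanSpace ℝ (Fin n)) 1,
    (∏ i, ((ω : EuclideanSpace ℝ (Fin n)) i) ^ (2 * γ i)) ∂(sphereMeasure n)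
  have hpolar (t : ℝ) : ∫ ξ : EuclideanSpace ℝ (Fin n),
      (∏ i, (ξ i) ^ (2 * γ i)) * exp (-2 * β * ‖ξ‖ ^ 2) * cos (t * α * ‖ξ‖) ^ 2 =
      S * ∫ r in Ioi 0, r ^ (n - 1 + 2 * M) * exp (-(2 * β) * r ^ 2) * cos (t * α * r) ^ 2 := by
    have h := EuclideanSpace.integral_prod_pow_mul_fun_norm (fun i ↦ 2 * γ i)
      fun r ↦ exp (-2 * β * r ^ 2) * cos (t * α * r) ^ 2
    rw [Fintype.card_fin, ← Finset.mul_sum] at h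
    simp only [neg_mul, ← mul_assoc] at h ⊢
    exact h
  have hlim := ((tendsto_setIntegral_mul_cos_sq_atTop measurableSet_Ioi
    (integrableOn_pow_mul_exp_neg_mul_sq (b := 2 * β) (by positivity) (n - 1 + 2 * M))).comp
    (tendsto_id.atTop_mul_const hα)).const_mul S
  rw [integral_pow_mul_exp_neg_mul_sq (by positivity)] at hlim
  convert hlim.congr fun t ↦ (hpolar t).symm using 2
  have hexp : ((n - 1 + 2 * M : ℕ) + 1 : ℝ) / 2 = n / 2 + M := by
    push_cast [Nat.cast_sub hn]
    ring
  have hexp' : -((n - 1 + 2 * M : ℕ) + 1 : ℝ) / 2 = -n / 2 - M := by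
    rw [neg_div, hexp]
    ring
  rw [hexp', hexp, mul_rpow zero_le_two hβ.le, rpow_sub two_pos _ 2, rpow_two]
  ring

/-- Asymptotics of `‖∂ₓ^γ W_c^{(α,β)}(t)‖_{L²}²`, computed on the Fourier side via
Plancherel: the squared norm is `∫ ξ^{2γ} e^{-2β|ξ|²} cos²(tα|ξ|) dξ`, and as `t → ∞`
it converges to `2^{-n/2-|γ|-2} Γ(n/2+|γ|) β^{-n/2-|γ|} ∫_{𝕊^{n-1}} ω^{2γ} dω`. -/
theorem Wc_deriv_L2_norm_sq_tendsto (n : ℕ) (hn : 1 ≤ n) (γ : Fin n → ℕ)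
    (hγ : 0 < ∫ ω : sphere (0 : EuclideanSpace ℝ (Fin n)) 1,
        (∏ i, ((ω : EuclideanSpace ℝ (Fin n)) i) ^ (2 * γ i)) ∂(sphereMeasure n))
    (α β : ℝ) (hα : 0 < α) (hβ : 0 < β) :
    Filter.Tendsto
      (fun t : ℝ => ∫ ξ : EuclideanSpace ℝ (Fin n),
        (∏ i, (ξ i) ^ (2 * γ i)) * Real.exp (-2 * β * ‖ξ‖ ^ 2) *
          Real.cos (t * α * ‖ξ‖) ^ 2)
      Filter.atTop
      (nhds ((2 : ℝ) ^ (-(n : ℝ) / 2 - (∑ i, γ i : ℕ) - 2) *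
        Real.Gamma ((n : ℝ) / 2 + (∑ i, γ i : ℕ)) *
        β ^ (-(n : ℝ) / 2 - (∑ i, γ i : ℕ)) *
        ∫ ω : sphere (0 : EuclideanSpace ℝ (Fin n)) 1,
          (∏ i, ((ω : EuclideanSpace ℝ (Fin n)) i) ^ (2 * γ i)) ∂(sphereMeasure n))) :=
  Wc_deriv_L2_norm_sq_tendsto_general n hn γ α β hα hβ
end

section
/- Let α > 0 and β > 0. There exist constants C₁, C₂ > 0, independent of β, such that for all t > 4π/(3α), C₁ e^{-β} t^{1/2} ≤ ( ∫_ℝ e^{-2βξ²} sin²(tαξ)/(α²ξ²) dξ )^{1/2} ≤ C₂ t^{1/2}. -/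
/-!
Upper bound: `sin² x ≤ 2x² / (1 + x²)` and `e^{-2βξ²} ≤ 1` dominate the integrand by
`2t² / (1 + (tαξ)²)`, whose integral is `2πt/α`. Lower bound: on
`0 < ξ ≤ π/(2tα)`, an interval inside `[0, 1]` as soon as `tα ≥ π/2`, Jordan's inequality
`sin x ≥ 2x/π` bounds the integrand below by `e^{-2β} (2t/π)²`.
-/

open MeasureTheory Real

lemma sin_sq_mul_one_add_sq_le (x : ℝ) : sin x ^ 2 * (1 + x ^ 2) ≤ 2 * x ^ 2 := by
  nlinarith [sin_sq_le_one x, sin_sq_le_sq (x := x), sq_nonneg x]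

lemma integrable_inv_one_add_mul_sq {c : ℝ} (hc : c ≠ 0) :
    Integrable fun ξ : ℝ => (1 + (c * ξ) ^ 2)⁻¹ :=
  (integrable_comp_mul_left_iff (fun y : ℝ => (1 + y ^ 2)⁻¹) hc).2 integrable_inv_one_add_sq

lemma integral_inv_one_add_mul_sq (c : ℝ) : ∫ ξ : ℝ, (1 + (c * ξ) ^ 2)⁻¹ = π / |c| := by
  rw [Measure.integral_comp_mul_left (fun y : ℝ => (1 + y ^ 2)⁻¹) c,
    integral_univ_inv_one_add_sq, abs_inv, smul_eq_mul, inv_mul_eq_div]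

/-- The squared modulus of the symbol `e^{-βξ²} sin(tαξ) / (αξ)` of `W_s^{(α,β)}(t)`. -/
noncomputable def symbolSq (α β t ξ : ℝ) : ℝ :=
  exp (-2 * β * ξ ^ 2) * sin (t * α * ξ) ^ 2 / (α ^ 2 * ξ ^ 2)

section symbolSq

variable {α β t : ℝ}

lemma symbolSq_nonneg (ξ : ℝ) : 0 ≤ symbolSq α β t ξ := by
  unfold symbolSq; positivity

lemma symbolSq_le (hβ : 0 ≤ β) (ξ : ℝ) :
    symbolSq α β t ξ ≤ 2 * t ^ 2 * (1 + (t * α * ξ) ^ 2)⁻¹ := by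
  rcases eq_or_ne (α * ξ) 0 with hαξ | hαξ
  · have hden : α ^ 2 * ξ ^ 2 = 0 := by rw [← mul_pow, hαξ]; ring
    simp only [symbolSq, hden, div_zero]
    positivity
  have hden : 0 < α ^ 2 * ξ ^ 2 := by rw [← mul_pow]; positivity
  have hexp : exp (-2 * β * ξ ^ 2) ≤ 1 := exp_le_one_iff.2 (by nlinarith [sq_nonneg ξ])
  have hsin := sin_sq_mul_one_add_sq_le (t * α * ξ)
  rw [symbolSq, div_le_iff₀ hden,
    show 2 * t ^ 2 * (1 + (t * α * ξ) ^ 2)⁻¹ * (α ^ 2 * ξ ^ 2)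
      = 2 * (t * α * ξ) ^ 2 / (1 + (t * α * ξ) ^ 2) by ring,
    le_div_iff₀ (by positivity), mul_assoc]
  exact (mul_le_of_le_one_left (by positivity) hexp).trans hsin

lemma integrable_symbolSq (hβ : 0 ≤ β) (htα : t * α ≠ 0) : Integrable (symbolSq α β t) := by
  have hmeas : Measurable (symbolSq α β t) := by unfold symbolSq; fun_prop
  refine ((integrable_inv_one_add_mul_sq htα).const_mul (2 * t ^ 2)).mono
    hmeas.aestronglyMeasurable (Filter.Eventually.of_forall fun ξ => ?_)
  rw [norm_of_nonneg (symbolSq_nonneg ξ), norm_of_nonneg (by positivity)]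
  exact symbolSq_le hβ ξ

lemma integral_symbolSq_le (hβ : 0 ≤ β) (ht : 0 < t) (hα : 0 < α) :
    ∫ ξ, symbolSq α β t ξ ≤ 2 * π * t / α := by
  have htα : 0 < t * α := mul_pos ht hα
  calc ∫ ξ, symbolSq α β t ξ ≤ ∫ ξ, 2 * t ^ 2 * (1 + (t * α * ξ) ^ 2)⁻¹ :=
        integral_mono (integrable_symbolSq hβ htα.ne')
          ((integrable_inv_one_add_mul_sq htα.ne').const_mul _) (symbolSq_le hβ)
    _ = 2 * π * t / α := by
        rw [integral_const_mul, integral_inv_one_add_mul_sq, abs_of_pos htα]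
        field_simp

lemma exp_mul_sq_le_symbolSq (hβ : 0 ≤ β) (ht : 0 < t) (hα : 0 < α) {ξ : ℝ} (hξ : 0 < ξ)
    (hξ₁ : ξ ≤ 1) (hξπ : t * α * ξ ≤ π / 2) :
    exp (-2 * β) * (2 * t / π) ^ 2 ≤ symbolSq α β t ξ := by
  have hjordan : 2 / π * (t * α * ξ) ≤ sin (t * α * ξ) := mul_le_sin (by positivity) hξπ
  have hexp : exp (-2 * β) ≤ exp (-2 * β * ξ ^ 2) :=
    exp_le_exp.2 (by nlinarith [mul_le_one₀ hξ₁ hξ.le hξ₁])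
  have hsin : (2 * t / π) ^ 2 ≤ sin (t * α * ξ) ^ 2 / (α ^ 2 * ξ ^ 2) := by
    rw [le_div_iff₀ (by positivity)]
    calc (2 * t / π) ^ 2 * (α ^ 2 * ξ ^ 2) = (2 / π * (t * α * ξ)) ^ 2 := by ring
      _ ≤ sin (t * α * ξ) ^ 2 := pow_le_pow_left₀ (by positivity) hjordan 2
  rw [symbolSq, mul_div_assoc (exp _)]
  exact mul_le_mul hexp hsin (by positivity) (exp_pos _).le

lemma le_integral_symbolSq (hβ : 0 ≤ β) (ht : 0 < t) (hα : 0 < α) (htα : π / 2 ≤ t * α) :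
    2 * exp (-2 * β) * t / (π * α) ≤ ∫ ξ, symbolSq α β t ξ := by
  set b := π / (2 * (t * α)) with hb_def
  have hb : 0 < b := by positivity
  have hb₁ : b ≤ 1 := by rw [div_le_one (by positivity)]; linarith
  have hbound : ∀ ξ ∈ Set.Ioc 0 b, exp (-2 * β) * (2 * t / π) ^ 2 ≤ symbolSq α β t ξ := by
    rintro ξ ⟨hξ, hξb⟩
    refine exp_mul_sq_le_symbolSq hβ ht hα hξ (hξb.trans hb₁) ?_
    calc t * α * ξ ≤ t * α * b := by gcongr
      _ = π / 2 := by rw [hb_def]; field_simp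
  have hint := integrable_symbolSq hβ (mul_pos ht hα).ne'
  calc 2 * exp (-2 * β) * t / (π * α)
        = exp (-2 * β) * (2 * t / π) ^ 2 * volume.real (Set.Ioc 0 b) := by
        rw [Real.volume_real_Ioc_of_le hb.le, sub_zero, hb_def]
        field_simp
    _ ≤ ∫ ξ in Set.Ioc 0 b, symbolSq α β t ξ :=
        setIntegral_ge_of_const_le_real measurableSet_Ioc (by simp) hbound hint.integrableOn
    _ ≤ ∫ ξ, symbolSq α β t ξ :=
        setIntegral_le_integral hint (Filter.Eventually.of_forall symbolSq_nonneg)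

end symbolSq

/-- One-dimensional `L²` bounds for the multiplier `e^{-βξ²} sin(tαξ)/(αξ)`:
`C₁ e^{-β} √t ≤ ‖W_s^{(α,β)}(t)‖_{L²(ℝ)} ≤ C₂ √t` for `t > 4π/(3α)`,
with `C₁, C₂` independent of `β`. -/
theorem Ws_L2_bounds_dim_one (α : ℝ) (hα : 0 < α) :
    ∃ C₁ C₂ : ℝ, 0 < C₁ ∧ 0 < C₂ ∧ ∀ β : ℝ, 0 < β → ∀ t : ℝ, 4 * Real.pi / (3 * α) < t →
      C₁ * Real.exp (-β) * Real.sqrt t ≤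
        Real.sqrt (∫ ξ : ℝ,
          Real.exp (-2 * β * ξ ^ 2) * Real.sin (t * α * ξ) ^ 2 / (α ^ 2 * ξ ^ 2)) ∧
      Real.sqrt (∫ ξ : ℝ,
          Real.exp (-2 * β * ξ ^ 2) * Real.sin (t * α * ξ) ^ 2 / (α ^ 2 * ξ ^ 2)) ≤
        C₂ * Real.sqrt t := by
  refine ⟨√(2 / (π * α)), √(2 * π / α), by positivity, by positivity, fun β hβ t ht => ?_⟩
  have htα : 4 * π / 3 < t * α := by
    rwa [div_lt_iff₀ (by positivity), mul_comm 3, ← mul_assoc, ← div_lt_iff₀ three_pos] at ht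
  have ht0 : 0 < t := pos_of_mul_pos_left (by linarith [pi_pos]) hα.le
  change _ ≤ √(∫ ξ, symbolSq α β t ξ) ∧ √(∫ ξ, symbolSq α β t ξ) ≤ _
  constructor
  · rw [le_sqrt (by positivity) (integral_nonneg symbolSq_nonneg)]
    calc (√(2 / (π * α)) * exp (-β) * √t) ^ 2 = 2 * exp (-2 * β) * t / (π * α) := by
          rw [mul_pow, mul_pow, sq_sqrt (by positivity), sq_sqrt ht0.le, ← exp_nat_mul]
          push_cast; ring_nf
      _ ≤ _ := le_integral_symbolSq hβ.le ht0 hα (by linarith [pi_pos])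
  · rw [← sqrt_mul (by positivity), div_mul_eq_mul_div]
    exact sqrt_le_sqrt (integral_symbolSq_le hβ.le ht0 hα)
end

section
/- Let α > 0, β > 0 and t ≥ 2. Then ∫_{t^{-1/2}}^{1} e^{-2βr²} sin²(tαr) r^{-1} dr ≥ C e^{-2β} ( log(t+2) − t^{-1/2} − C' ) for constants C, C' > 0 depending only on α. -/
/-!
Since `sin² z = (1 - cos 2z) / 2`, the integral of `sin² (k r) / r` over `[a, b]` is half of
`log (b / a)` minus half of `∫ cos (2 k r) / r`, and one integration by parts bounds the latter by
`1 / (k a)`. With `a = t^{-1/2}`, `b = 1`, `k = t α` this gives `log t / 4 - 1 / (2 α)`, because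
`k a = α √t ≥ α`. The Gaussian weight is at least `e^{-2β}` on `[a, 1]`.
-/

open MeasureTheory Real intervalIntegral Set

section

variable {a b : ℝ}

lemma pos_of_mem_uIcc {r : ℝ} (ha : 0 < a) (hb : 0 < b) (hr : r ∈ uIcc a b) : 0 < r :=
  (lt_inf_iff.mpr ⟨ha, hb⟩).trans_le hr.1

lemma abs_sin_div_le_one_div {x : ℝ} (hx : 0 < x) : |sin x / x| ≤ 1 / x := by
  rw [abs_div, abs_of_pos hx]
  exact div_le_div_of_nonneg_right (abs_sin_le_one x) hx.le

lemma abs_integral_cos_mul_div_le {c : ℝ} (ha : 0 < a) (hab : a ≤ b) (hc : 0 < c) :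
    |∫ r in a..b, cos (c * r) / r| ≤ 2 / (c * a) := by
  have hpos : ∀ r ∈ uIcc a b, 0 < r := fun r => pos_of_mem_uIcc ha (ha.trans_le hab)
  have hne : ∀ r ∈ uIcc a b, c * r ≠ 0 := fun r hr => (mul_pos hc (hpos r hr)).ne'
  have hne' : ∀ r ∈ uIcc a b, c * r ^ 2 ≠ 0 := fun r hr => by have := hpos r hr; positivity
  have hlin : ∀ r, HasDerivAt (fun r => c * r) c r := fun r => by
    simpa using (hasDerivAt_id r).const_mul c
  have hderiv : ∀ r ∈ uIcc a b, HasDerivAt (fun r => sin (c * r) / (c * r))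
      (cos (c * r) / r - sin (c * r) / (c * r ^ 2)) r := fun r hr =>
    ((hlin r).sin.div (hlin r) (hne r hr)).congr_deriv (by field_simp [(hpos r hr).ne'])
  have hderiv_inv : ∀ r ∈ uIcc a b, HasDerivAt (fun r => -1 / (c * r)) (1 / (c * r ^ 2)) r :=
    fun r hr => ((hasDerivAt_const r (-1 : ℝ)).div (hlin r) (hne r hr)).congr_deriv
      (by field_simp [(hpos r hr).ne']; ring)
  have hcos : IntervalIntegrable (fun r => cos (c * r) / r) volume a b :=
    (ContinuousOn.div (by fun_prop) continuousOn_id fun r hr => (hpos r hr).ne').intervalIntegrable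
  have hsin : IntervalIntegrable (fun r => sin (c * r) / (c * r ^ 2)) volume a b :=
    (ContinuousOn.div (by fun_prop) (by fun_prop) hne').intervalIntegrable
  have hinv : IntervalIntegrable (fun r => 1 / (c * r ^ 2)) volume a b :=
    (ContinuousOn.div (by fun_prop) (by fun_prop) hne').intervalIntegrable
  have hparts : ∫ r in a..b, cos (c * r) / r =
      (sin (c * b) / (c * b) - sin (c * a) / (c * a)) +
        ∫ r in a..b, sin (c * r) / (c * r ^ 2) := by
    rw [← integral_eq_sub_of_hasDerivAt hderiv (hcos.sub hsin), integral_sub hcos hsin]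
    ring
  have hrest : |∫ r in a..b, sin (c * r) / (c * r ^ 2)| ≤ 1 / (c * a) - 1 / (c * b) := by
    calc |∫ r in a..b, sin (c * r) / (c * r ^ 2)|
        ≤ ∫ r in a..b, |sin (c * r) / (c * r ^ 2)| := abs_integral_le_integral_abs hab
      _ ≤ ∫ r in a..b, 1 / (c * r ^ 2) := by
          refine integral_mono_on hab hsin.abs hinv fun r hr => ?_
          have hr : 0 < c * r ^ 2 := by have := hpos r (Icc_subset_uIcc hr); positivity
          rw [abs_div, abs_of_pos hr]
          exact div_le_div_of_nonneg_right (abs_sin_le_one _) hr.le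
      _ = 1 / (c * a) - 1 / (c * b) := by
          rw [integral_eq_sub_of_hasDerivAt hderiv_inv hinv]
          ring
  have hb_end := abs_sin_div_le_one_div (mul_pos hc (ha.trans_le hab))
  have ha_end := abs_sin_div_le_one_div (mul_pos hc ha)
  rw [hparts]
  calc _ ≤ |sin (c * b) / (c * b)| + |sin (c * a) / (c * a)| +
        |∫ r in a..b, sin (c * r) / (c * r ^ 2)| :=
        (abs_add_le _ _).trans (by gcongr; exact abs_sub _ _)
    _ ≤ 1 / (c * b) + 1 / (c * a) + (1 / (c * a) - 1 / (c * b)) := by gcongr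
    _ = 2 / (c * a) := by ring

lemma integral_sin_sq_mul_div_eq (k : ℝ) (ha : 0 < a) (hb : 0 < b) :
    ∫ r in a..b, sin (k * r) ^ 2 / r =
      log (b / a) / 2 - (∫ r in a..b, cos (2 * k * r) / r) / 2 := by
  have hne : ∀ r ∈ uIcc a b, r ≠ 0 := fun r hr => (pos_of_mem_uIcc ha hb hr).ne'
  have hinv : IntervalIntegrable (fun r => r⁻¹) volume a b :=
    (continuousOn_inv₀.mono fun r hr => hne r hr).intervalIntegrable
  have hcos : IntervalIntegrable (fun r => cos (2 * k * r) / r) volume a b :=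
    (ContinuousOn.div (by fun_prop) continuousOn_id hne).intervalIntegrable
  calc ∫ r in a..b, sin (k * r) ^ 2 / r = ∫ r in a..b, (r⁻¹ - cos (2 * k * r) / r) / 2 := by
        refine integral_congr fun r _ => ?_
        rw [sin_sq_eq_half_sub, mul_assoc]
        ring
    _ = _ := by
        rw [intervalIntegral.integral_div, integral_sub hinv hcos, integral_inv_of_pos ha hb,
          sub_div]

lemma log_div_sub_le_integral_sin_sq_mul_div {k : ℝ} (ha : 0 < a) (hab : a ≤ b) (hk : 0 < k) :
    log (b / a) / 2 - 1 / (2 * k * a) ≤ ∫ r in a..b, sin (k * r) ^ 2 / r := by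
  have hcos := abs_le.mp (abs_integral_cos_mul_div_le ha hab (mul_pos two_pos hk))
  have hhalf : 2 / (2 * k * a) / 2 = 1 / (2 * k * a) := by ring
  rw [integral_sin_sq_mul_div_eq k ha (ha.trans_le hab)]
  linarith [hcos.2]

lemma mul_integral_le_integral_mul {f w : ℝ → ℝ} {m : ℝ} (hab : a ≤ b)
    (hf : IntervalIntegrable f volume a b)
    (hwf : IntervalIntegrable (fun x => w x * f x) volume a b)
    (hf0 : ∀ x ∈ Icc a b, 0 ≤ f x) (hm : ∀ x ∈ Icc a b, m ≤ w x) :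
    m * ∫ x in a..b, f x ≤ ∫ x in a..b, w x * f x := by
  rw [← intervalIntegral.integral_const_mul]
  exact integral_mono_on hab (hf.const_mul m) hwf fun x hx =>
    mul_le_mul_of_nonneg_right (hm x hx) (hf0 x hx)

lemma exp_mul_integral_sin_sq_div_le {β k : ℝ} (hβ : 0 ≤ β) (ha : 0 < a) (hab : a ≤ b) :
    exp (-2 * β * b ^ 2) * ∫ r in a..b, sin (k * r) ^ 2 / r ≤
      ∫ r in a..b, exp (-2 * β * r ^ 2) * sin (k * r) ^ 2 / r := by
  have hpos : ∀ r ∈ Icc a b, 0 < r := fun r hr => ha.trans_le hr.1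
  have hcont : ContinuousOn (fun r => sin (k * r) ^ 2 / r) (uIcc a b) :=
    ContinuousOn.div (by fun_prop) continuousOn_id fun r hr =>
      (pos_of_mem_uIcc ha (ha.trans_le hab) hr).ne'
  simp_rw [mul_div_assoc]
  refine mul_integral_le_integral_mul hab hcont.intervalIntegrable
    ((continuous_exp.comp (by fun_prop)).continuousOn.mul hcont).intervalIntegrable
    (fun r hr => div_nonneg (sq_nonneg _) (hpos r hr).le) fun r hr => ?_
  have hsq : β * r ^ 2 ≤ β * b ^ 2 := by
    have := hpos r hr
    gcongr
    exact hr.2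
  exact exp_le_exp.mpr (by linarith)

end

/-- Logarithmic lower bound:
`∫_{t^{-1/2}}^1 e^{-2βr²} sin²(tαr)/r dr ≥ C e^{-2β} (log(t+2) − t^{-1/2} − C')`. -/
theorem integral_exp_sin_sq_div_ge (α : ℝ) (hα : 0 < α) :
    ∃ C C' : ℝ, 0 < C ∧ 0 < C' ∧ ∀ β : ℝ, 0 < β → ∀ t : ℝ, 2 ≤ t →
      (∫ r in t ^ (-(1 : ℝ) / 2)..1,
          Real.exp (-2 * β * r ^ 2) * Real.sin (t * α * r) ^ 2 / r) ≥
        C * Real.exp (-2 * β) * (Real.log (t + 2) - t ^ (-(1 : ℝ) / 2) - C') := by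
  refine ⟨1 / 4, 1 + 2 / α, by norm_num, by positivity, fun β hβ t ht => ?_⟩
  have ht0 : 0 < t := by linarith
  set a := t ^ (-(1 : ℝ) / 2)
  have ha0 : 0 < a := rpow_pos_of_pos ht0 _
  have ha1 : a ≤ 1 := rpow_le_one_of_one_le_of_nonpos (by linarith) (by norm_num)
  have hlog_a : log (1 / a) = log t / 2 := by
    rw [one_div, log_inv, log_rpow ht0]
    ring
  have hka : 1 / (2 * (t * α) * a) ≤ 2 / α / 4 := by
    have hta : 1 ≤ t * a := by
      rw [← rpow_one_add' ht0.le (by norm_num)]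
      exact one_le_rpow (by linarith) (by norm_num)
    calc 1 / (2 * (t * α) * a) ≤ 1 / (2 * α) :=
          one_div_le_one_div_of_le (by positivity) (by nlinarith)
      _ = 2 / α / 4 := by ring
  have hlog_t : log (t + 2) ≤ log t + 1 := by
    have h2t : log (t + 2) ≤ log (2 * t) := log_le_log (by linarith) (by linarith)
    rw [log_mul two_ne_zero ht0.ne'] at h2t
    linarith [log_two_lt_d9]
  have hsin := log_div_sub_le_integral_sin_sq_mul_div ha0 ha1 (mul_pos ht0 hα)
  have hweight := exp_mul_integral_sin_sq_div_le (k := t * α) hβ.le ha0 ha1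
  rw [one_pow, mul_one] at hweight
  rw [ge_iff_le]
  calc 1 / 4 * exp (-2 * β) * (log (t + 2) - a - (1 + 2 / α))
      = exp (-2 * β) * ((log (t + 2) - a - (1 + 2 / α)) / 4) := by ring
    _ ≤ exp (-2 * β) * ∫ r in a..1, sin (t * α * r) ^ 2 / r := by gcongr; linarith
    _ ≤ _ := hweight
end

section
/- Let α₁ > α₂ > 0, β > 0. Then for all sufficiently large t, ∫₀^∞ e^{-2βr²} ( sin(tα₁r)/α₁ − sin(tα₂r)/α₂ )² r^{-1} dr ≥ C e^{-2β} (1/α₁² + 1/α₂²) log(t+2) − C' for constants C, C' > 0 independent of t and β. -/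
/-!
On `[1/t, 1]` the Gaussian weight is at least `e^{-2β}`, and the substitution `u = t r`, which
preserves `dr / r`, turns what remains into `∫₁ᵗ (sin (α₁ u) / α₁ - sin (α₂ u) / α₂)² du / u`.
Expanding the square by product-to-sum, its constant part `1 / (2α₁²) + 1 / (2α₂²)` contributes
`log t`, while each oscillatory term `cos (k u) / u` with `k > 0` integrates to at most `2 / k`
in absolute value (integration by parts), uniformly in `t`.
-/

open MeasureTheory Real Set

theorem intervalIntegral.integral_comp_mul_div_self (h : ℝ → ℝ) {c : ℝ} (hc : c ≠ 0) (a b : ℝ) :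
    ∫ r in a..b, h (c * r) / r = ∫ u in c * a..c * b, h u / u := by
  have hscale := intervalIntegral.integral_comp_mul_left (a := a) (b := b) (fun u => h u / u) hc
  beta_reduce at hscale
  rw [smul_eq_mul, eq_inv_mul_iff_mul_eq₀ hc] at hscale
  rw [← hscale, ← intervalIntegral.integral_const_mul]
  refine intervalIntegral.integral_congr fun r _ => ?_
  simp only [← mul_div_assoc, mul_div_mul_left _ _ hc]

theorem abs_integral_cos_div_le {a b : ℝ} (ha : 0 < a) (hab : a ≤ b) :
    |∫ x in a..b, cos x / x| ≤ 2 / a := by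
  have hpos : ∀ x ∈ uIcc a b, 0 < x := fun x hx =>
    ha.trans_le (uIcc_of_le hab ▸ hx).1
  have hinv : ∀ x ∈ uIcc a b, HasDerivAt (fun x => x⁻¹) (-(x ^ 2)⁻¹) x :=
    fun x hx => hasDerivAt_inv (hpos x hx).ne'
  have hsq : ContinuousOn (fun x : ℝ => (x ^ 2)⁻¹) (uIcc a b) :=
    (continuousOn_pow 2).inv₀ fun x hx => pow_ne_zero 2 (hpos x hx).ne'
  have hparts := intervalIntegral.integral_mul_deriv_eq_deriv_mul hinv
    (fun x _ => hasDerivAt_sin x) hsq.neg.intervalIntegrable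
    (continuous_cos.intervalIntegrable _ _)
  have hsq_int : ∫ x in a..b, (x ^ 2)⁻¹ = a⁻¹ - b⁻¹ := by
    rw [intervalIntegral.integral_eq_sub_of_hasDerivAt (f := fun x => -x⁻¹)
      (fun x hx => by simpa using (hinv x hx).fun_neg) hsq.intervalIntegrable]
    ring
  have hrem : |∫ x in a..b, -(x ^ 2)⁻¹ * sin x| ≤ a⁻¹ - b⁻¹ := by
    rw [← hsq_int]
    refine (intervalIntegral.abs_integral_le_integral_abs hab).trans
      (intervalIntegral.integral_mono_on hab ?_ hsq.intervalIntegrable fun x _ => ?_)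
    · exact (hsq.neg.mul continuous_sin.continuousOn).abs.intervalIntegrable
    · rw [abs_mul, abs_neg, abs_of_nonneg (inv_nonneg.2 (sq_nonneg x))]
      exact mul_le_of_le_one_right (inv_nonneg.2 (sq_nonneg x)) (abs_sin_le_one x)
  have hb : |b⁻¹ * sin b| ≤ b⁻¹ := by
    have hb0 : 0 < b⁻¹ := inv_pos.2 (ha.trans_le hab)
    rw [abs_mul, abs_of_pos hb0]
    exact mul_le_of_le_one_right hb0.le (abs_sin_le_one b)
  have ha' : |a⁻¹ * sin a| ≤ a⁻¹ := by
    rw [abs_mul, abs_of_pos (inv_pos.2 ha)]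
    exact mul_le_of_le_one_right (by positivity) (abs_sin_le_one a)
  simp_rw [div_eq_inv_mul (cos _)]
  rw [hparts]
  calc _ ≤ |b⁻¹ * sin b| + |a⁻¹ * sin a| + |∫ x in a..b, -(x ^ 2)⁻¹ * sin x| :=
        (abs_sub _ _).trans (add_le_add_left (abs_sub _ _) _)
    _ ≤ b⁻¹ + a⁻¹ + (a⁻¹ - b⁻¹) := by gcongr
    _ = 2 / a := by ring

theorem abs_integral_cos_mul_div_le_s14 {k T : ℝ} (hk : 0 < k) (hT : 1 ≤ T) :
    |∫ u in (1 : ℝ)..T, cos (k * u) / u| ≤ 2 / k := by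
  rw [intervalIntegral.integral_comp_mul_div_self cos hk.ne', mul_one]
  exact abs_integral_cos_div_le hk (le_mul_of_one_le_right hk.le hT)

theorem sin_div_sub_sin_div_sq (a b x : ℝ) :
    (sin (a * x) / a - sin (b * x) / b) ^ 2 = 1 / (2 * a ^ 2) + 1 / (2 * b ^ 2) -
      (cos (2 * a * x) / (2 * a ^ 2) + cos (2 * b * x) / (2 * b ^ 2) +
        cos ((a - b) * x) / (a * b) - cos ((a + b) * x) / (a * b)) := by
  rw [sub_mul, add_mul, cos_sub, cos_add, mul_assoc 2 a, mul_assoc 2 b, cos_two_mul, cos_two_mul,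
    cos_sq', cos_sq']
  ring

theorem sin_sq_mul_div_le (c : ℝ) {r : ℝ} (hr : 0 < r) : sin (c * r) ^ 2 / r ≤ |c| := by
  rw [div_le_iff₀ hr, sq, ← abs_mul_abs_self]
  calc |sin (c * r)| * |sin (c * r)| ≤ |c * r| * 1 :=
        mul_le_mul abs_sin_le_abs (abs_sin_le_one _) (abs_nonneg _) (abs_nonneg _)
    _ = |c| * r := by rw [mul_one, abs_mul, abs_of_pos hr]

theorem sin_div_sub_sin_div_sq_div_le (a b c d : ℝ) {r : ℝ} (hr : 0 < r) :
    (sin (a * r) / c - sin (b * r) / d) ^ 2 / r ≤ 2 * (|a| / c ^ 2 + |b| / d ^ 2) := by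
  have hsplit : (sin (a * r) / c - sin (b * r) / d) ^ 2 / r ≤
      2 * (sin (a * r) ^ 2 / r / c ^ 2 + sin (b * r) ^ 2 / r / d ^ 2) := by
    rw [div_le_iff₀ hr]
    calc _ ≤ 2 * (sin (a * r) / c) ^ 2 + 2 * (sin (b * r) / d) ^ 2 := by
          nlinarith [sq_nonneg (sin (a * r) / c + sin (b * r) / d)]
      _ = _ := by field_simp
  refine hsplit.trans ?_
  gcongr
  · exact sin_sq_mul_div_le a hr
  · exact sin_sq_mul_div_le b hr

theorem exists_log_sub_le_integral_sin_div_sub_sin_div_sq_div {α₁ α₂ : ℝ} (h₂ : 0 < α₂)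
    (h₁₂ : α₂ < α₁) : ∃ K > 0, ∀ T ≥ 1, (1 / (2 * α₁ ^ 2) + 1 / (2 * α₂ ^ 2)) * log T - K ≤
      ∫ u in (1 : ℝ)..T, (sin (α₁ * u) / α₁ - sin (α₂ * u) / α₂) ^ 2 / u := by
  have h₁ : 0 < α₁ := h₂.trans h₁₂
  set A := 1 / (2 * α₁ ^ 2)
  set B := 1 / (2 * α₂ ^ 2)
  set D := 1 / (α₁ * α₂)
  refine ⟨A * (2 / (2 * α₁)) + B * (2 / (2 * α₂)) + D * (2 / (α₁ - α₂)) + D * (2 / (α₁ + α₂)),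
    by positivity, fun T hT => ?_⟩
  set I := fun k => ∫ u in (1 : ℝ)..T, cos (k * u) / u
  have hpos : ∀ u ∈ uIcc 1 T, 0 < u := fun u hu => one_pos.trans_le (uIcc_of_le hT ▸ hu).1
  have hint : ∀ k, IntervalIntegrable (fun u => cos (k * u) / u) volume 1 T := fun k =>
    (ContinuousOn.div (by fun_prop) continuousOn_id fun u hu => (hpos u hu).ne').intervalIntegrable
  have hinv : IntervalIntegrable (fun u : ℝ => u⁻¹) volume 1 T :=
    (continuousOn_id.inv₀ fun u hu => (hpos u hu).ne').intervalIntegrable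
  have hsplit : ∫ u in (1 : ℝ)..T, (sin (α₁ * u) / α₁ - sin (α₂ * u) / α₂) ^ 2 / u =
      (A + B) * log T - (A * I (2 * α₁) + B * I (2 * α₂) + D * I (α₁ - α₂) - D * I (α₁ + α₂)) := by
    have hpt : ∀ u ∈ uIcc 1 T, (sin (α₁ * u) / α₁ - sin (α₂ * u) / α₂) ^ 2 / u =
        (A + B) * u⁻¹ - (A * (cos (2 * α₁ * u) / u) + B * (cos (2 * α₂ * u) / u) +
          D * (cos ((α₁ - α₂) * u) / u) - D * (cos ((α₁ + α₂) * u) / u)) := fun u _ => by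
      rw [sin_div_sub_sin_div_sq]
      ring
    have i₁ := (hint (2 * α₁)).const_mul A
    have i₂ := (hint (2 * α₂)).const_mul B
    have i₃ := (hint (α₁ - α₂)).const_mul D
    have i₄ := (hint (α₁ + α₂)).const_mul D
    rw [intervalIntegral.integral_congr hpt,
      intervalIntegral.integral_sub (hinv.const_mul _) (((i₁.add i₂).add i₃).sub i₄),
      intervalIntegral.integral_sub ((i₁.add i₂).add i₃) i₄,
      intervalIntegral.integral_add (i₁.add i₂) i₃, intervalIntegral.integral_add i₁ i₂]
    simp only [intervalIntegral.integral_const_mul, I,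
      integral_inv_of_pos one_pos (one_pos.trans_le hT), div_one]
  have hosc : |A * I (2 * α₁) + B * I (2 * α₂) + D * I (α₁ - α₂) - D * I (α₁ + α₂)| ≤
      A * (2 / (2 * α₁)) + B * (2 / (2 * α₂)) + D * (2 / (α₁ - α₂)) + D * (2 / (α₁ + α₂)) := by
    have hI : ∀ k > 0, |I k| ≤ 2 / k := fun k hk => abs_integral_cos_mul_div_le_s14 hk hT
    calc _ ≤ |A * I (2 * α₁)| + |B * I (2 * α₂)| + |D * I (α₁ - α₂)| + |D * I (α₁ + α₂)| :=
          (abs_sub _ _).trans (add_le_add_left ((abs_add_le _ _).trans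
            (add_le_add_left (abs_add_le _ _) _)) _)
      _ ≤ _ := by
        simp only [abs_mul, abs_of_pos (show 0 < A by positivity),
          abs_of_pos (show 0 < B by positivity), abs_of_pos (show 0 < D by positivity)]
        gcongr <;> apply hI <;> positivity
  rw [hsplit]
  linarith [(abs_le.1 hosc).2]

section GaussianWeight

variable {β : ℝ} {ψ : ℝ → ℝ}

theorem integrableOn_exp_mul_div_Ioi (hβ : 0 < β) (hψ : Continuous ψ) (hψ0 : ∀ r, 0 ≤ ψ r)
    {M : ℝ} (hM : ∀ r > 0, ψ r / r ≤ M) :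
    IntegrableOn (fun r => exp (-2 * β * r ^ 2) * ψ r / r) (Ioi 0) := by
  have hexp : Integrable (fun r : ℝ => M * exp (-2 * β * r ^ 2)) := by
    simpa [neg_mul] using (integrable_exp_neg_mul_sq (by linarith : 0 < 2 * β)).const_mul M
  refine hexp.integrableOn.mono' ?_ ?_
  · exact (ContinuousOn.div (by fun_prop) continuousOn_id fun r hr => (ne_of_gt hr))
      |>.aestronglyMeasurable measurableSet_Ioi
  · filter_upwards [ae_restrict_mem measurableSet_Ioi] with r (hr : 0 < r)
    rw [norm_of_nonneg (by have := hψ0 r; positivity), mul_div_assoc, mul_comm]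
    exact mul_le_mul_of_nonneg_right (hM r hr) (exp_pos _).le

theorem exp_mul_integral_le_setIntegral_Ioi (hβ : 0 ≤ β) (hψ : Continuous ψ)
    (hψ0 : ∀ r, 0 ≤ ψ r) (hint : IntegrableOn (fun r => exp (-2 * β * r ^ 2) * ψ r / r) (Ioi 0))
    {s : ℝ} (hs : 0 < s) (hs1 : s ≤ 1) :
    exp (-2 * β) * ∫ r in s..1, ψ r / r ≤ ∫ r in Ioi 0, exp (-2 * β * r ^ 2) * ψ r / r := by
  have hpos : ∀ r ∈ uIcc s 1, 0 < r := fun r hr => hs.trans_le (uIcc_of_le hs1 ▸ hr).1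
  have hcont : ∀ c : ℝ → ℝ, Continuous c →
      IntervalIntegrable (fun r => c r * ψ r / r) volume s 1 := fun c hc =>
    (ContinuousOn.div (by fun_prop) continuousOn_id fun r hr => (hpos r hr).ne').intervalIntegrable
  calc exp (-2 * β) * ∫ r in s..1, ψ r / r = ∫ r in s..1, exp (-2 * β) * ψ r / r := by
        simp only [mul_div_assoc, intervalIntegral.integral_const_mul]
    _ ≤ ∫ r in s..1, exp (-2 * β * r ^ 2) * ψ r / r := by
        refine intervalIntegral.integral_mono_on hs1 (hcont _ continuous_const)
          (hcont _ (by fun_prop)) fun r hr => ?_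
        have hr0 : 0 < r := hs.trans_le hr.1
        have hr2 : r ^ 2 ≤ 1 := pow_le_one₀ hr0.le hr.2
        have hexp : exp (-2 * β) ≤ exp (-2 * β * r ^ 2) := exp_le_exp.2 (by nlinarith)
        exact div_le_div_of_nonneg_right (mul_le_mul_of_nonneg_right hexp (hψ0 r)) hr0.le
    _ = ∫ r in Ioc s 1, exp (-2 * β * r ^ 2) * ψ r / r := intervalIntegral.integral_of_le hs1
    _ ≤ ∫ r in Ioi 0, exp (-2 * β * r ^ 2) * ψ r / r := by
        refine setIntegral_mono_set hint ?_
          (Ioc_subset_Ioi_self.trans (Ioi_subset_Ioi hs.le)).eventuallyLE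
        filter_upwards [ae_restrict_mem measurableSet_Ioi] with r (hr : 0 < r)
        have := hψ0 r
        positivity

end GaussianWeight

theorem log_add_two_le_two_mul_log {t : ℝ} (ht : 2 ≤ t) : log (t + 2) ≤ 2 * log t := by
  calc log (t + 2) ≤ log (t ^ 2) := log_le_log (by linarith) (by nlinarith)
    _ = 2 * log t := by rw [log_pow, Nat.cast_ofNat]

/-- Logarithmic lower bound for the difference of two radial sine waves:
for `α₁ > α₂ > 0` and all sufficiently large `t`,
`∫₀^∞ e^{-2βr²} (sin(tα₁r)/α₁ − sin(tα₂r)/α₂)² r^{-1} dr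
  ≥ C e^{-2β} (1/α₁² + 1/α₂²) log(t+2) − C'`,
with `C, C'` independent of `t` and `β`. -/
theorem integral_sin_diff_sq_log_lower (α₁ α₂ : ℝ) (h₂ : 0 < α₂) (h₁₂ : α₂ < α₁) :
    ∃ C C' T : ℝ, 0 < C ∧ 0 < C' ∧ ∀ β : ℝ, 0 < β → ∀ t : ℝ, T ≤ t →
      (∫ r in Set.Ioi (0 : ℝ),
          Real.exp (-2 * β * r ^ 2) *
            (Real.sin (t * α₁ * r) / α₁ - Real.sin (t * α₂ * r) / α₂) ^ 2 / r) ≥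
        C * Real.exp (-2 * β) * (1 / α₁ ^ 2 + 1 / α₂ ^ 2) * Real.log (t + 2) - C' := by
  obtain ⟨K, hK, hlog⟩ := exists_log_sub_le_integral_sin_div_sub_sin_div_sq_div h₂ h₁₂
  refine ⟨1 / 4, K, 2, by norm_num, hK, fun β hβ t ht => ?_⟩
  have ht0 : 0 < t := by linarith
  have hψ : Continuous fun r => (sin (t * α₁ * r) / α₁ - sin (t * α₂ * r) / α₂) ^ 2 := by
    fun_prop
  have hint := integrableOn_exp_mul_div_Ioi hβ hψ (fun r => sq_nonneg _)
    fun r hr => sin_div_sub_sin_div_sq_div_le (t * α₁) (t * α₂) α₁ α₂ hr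
  have hscale : ∫ r in t⁻¹..1, (sin (t * α₁ * r) / α₁ - sin (t * α₂ * r) / α₂) ^ 2 / r =
      ∫ u in (1 : ℝ)..t, (sin (α₁ * u) / α₁ - sin (α₂ * u) / α₂) ^ 2 / u := by
    have h := intervalIntegral.integral_comp_mul_div_self
      (fun u => (sin (α₁ * u) / α₁ - sin (α₂ * u) / α₂) ^ 2) ht0.ne' t⁻¹ 1
    rw [mul_inv_cancel₀ ht0.ne', mul_one] at h
    simpa only [mul_left_comm α₁ t, mul_left_comm α₂ t, ← mul_assoc] using h
  have hE : exp (-2 * β) ≤ 1 := exp_le_one_iff.2 (by linarith)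
  calc _ ≤ exp (-2 * β) * ((1 / (2 * α₁ ^ 2) + 1 / (2 * α₂ ^ 2)) * log t - K) := by
        have hlog2 := mul_le_mul_of_nonneg_left (log_add_two_le_two_mul_log ht)
          (by positivity : 0 ≤ exp (-2 * β) * (1 / α₁ ^ 2 + 1 / α₂ ^ 2))
        have hc : 1 / (2 * α₁ ^ 2) + 1 / (2 * α₂ ^ 2) = (1 / α₁ ^ 2 + 1 / α₂ ^ 2) / 2 := by ring
        rw [hc]
        linarith [mul_le_mul_of_nonneg_right hE hK.le]
    _ ≤ _ := by
        refine (mul_le_mul_of_nonneg_left (hlog t (by linarith)) (exp_pos _).le).trans ?_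
        rw [← hscale]
        exact exp_mul_integral_le_setIntegral_Ioi hβ.le hψ (fun r => sq_nonneg _) hint
          (inv_pos.2 ht0) (inv_le_one_of_one_le₀ (by linarith))
end

section
/- Let n ≥ 2 and let P₁,…,Pₙ ∈ ℝⁿ with components Pₖ = (p_{k,1},…,p_{k,n}). Fix N ∈ {1,…,n} and define K₃ := ∫_{𝕊^{n-1}} ω_N² ( Σₖ ωₖ (ω · Pₖ) )² dω. Then for n ≥ 3, K₃ = (|𝕊^{n-1}|/(n(n+2)(n+4))) { 15 p_{N,N}² + Σ_{k≠N} (3p_{N,k}² + 3p_{k,N}² + 2p_{k,k}²) + (Σ_{k≠N} p_{k,k})² + 6 Σ_{k≠N} (p_{N,N} p_{k,k} + p_{N,k} p_{k,N}) + Σ_{k<ℓ, k≠N, ℓ≠N} (p_{k,ℓ} + p_{ℓ,k})² }. -/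
/-!
In polar coordinates, the Gaussian integral `∫_{ℝⁿ} f(x) e^{-|x|²/2} dx` of a function `f` that is
homogeneous of degree `d` equals `(∫_{𝕊^{n-1}} f) · ∫₀^∞ r^{d+n-1} e^{-r²/2} dr`. For `d = 6` the
radial factor is `n(n+2)(n+4)` times the one for `d = 0`, and the case `f = 1` identifies
`|𝕊^{n-1}|`; hence a sphere moment of degree 6 is `|𝕊^{n-1}| / (n(n+2)(n+4))` times the
normalised Gaussian moment of the same monomial. Gaussian moments of monomials factor over the
coordinates, and the one-dimensional recursion `m_{k+1} = k m_{k-1}` gives Wick's rule. Expanding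
`ω_N² (Σₖ ωₖ (ω · Pₖ))²` into monomials `ω_N² ω_k ω_i ω_l ω_j` and summing their Wick contractions
gives the formula once the index `N` is split off from the sums.
-/

open MeasureTheory Metric Finset

/-- The total surface measure `|𝕊^{n-1}|`. -/
noncomputable def sphereArea (n : ℕ) : ℝ := (sphereMeasure n Set.univ).toReal

open Real

lemma sum_sum_eq_sum_diag_add_sum_lt {ι M : Type*} [LinearOrder ι] [AddCommMonoid M]
    (s : Finset ι) (f : ι → ι → M) :
    ∑ i ∈ s, ∑ j ∈ s, f i j
      = ∑ i ∈ s, f i i + ∑ i ∈ s, ∑ j ∈ s with i < j, (f i j + f j i) := by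
  have htri : ∀ i j, f i j = (if i < j then f i j else 0) + (if i = j then f i j else 0)
      + (if j < i then f i j else 0) := fun i j => by
    rcases lt_trichotomy i j with h | rfl | h
    · simp [h, h.ne, h.not_gt]
    · simp
    · simp [h, h.ne', h.not_gt]
  conv_lhs => enter [2, i, 2, j]; rw [htri]
  have hswap : ∑ i ∈ s, ∑ j ∈ s, (if j < i then f i j else 0)
      = ∑ i ∈ s, ∑ j ∈ s, (if i < j then f j i else 0) := sum_comm
  simp only [sum_add_distrib, sum_filter, sum_ite_eq, sum_ite_mem, inter_self, hswap]
  abel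

lemma multiset_prod_map_eq_prod_pow_count {ι M : Type*} [Fintype ι] [DecidableEq ι]
    [CommMonoid M] (s : Multiset ι) (x : ι → M) :
    (s.map x).prod = ∏ t, x t ^ s.count t := by
  rw [Finset.prod_multiset_map_count]
  exact Finset.prod_subset (subset_univ _) fun t _ ht => by
    rw [Multiset.count_eq_zero_of_notMem (by simpa using ht), pow_zero]

lemma multiset_sum_map_ite_eq_count_mul {α R : Type*} [DecidableEq α] [NonAssocSemiring R]
    (a : α) (s : Multiset α) (c : R) :
    (s.map fun b => if a = b then c else 0).sum = s.count a * c := by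
  induction s using Multiset.induction_on with
  | empty => simp
  | cons b s ih =>
    by_cases h : a = b
    · subst h
      simp [ih, add_mul, add_comm]
    · simp [h, ih]

noncomputable def radialGaussMoment (m : ℕ) : ℝ :=
  ∫ r in Set.Ioi (0 : ℝ), r ^ m * exp (-(r ^ 2) / 2)

lemma radialGaussMoment_eq_Gamma (m : ℕ) :
    radialGaussMoment m
      = (1 / 2 : ℝ) ^ (-((m : ℝ) + 1) / 2) * (1 / 2) * Gamma (((m : ℝ) + 1) / 2) := by
  rw [radialGaussMoment, ← integral_rpow_mul_exp_neg_mul_rpow two_pos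
    (by linarith [m.cast_nonneg (α := ℝ)]) one_half_pos]
  refine setIntegral_congr_fun measurableSet_Ioi fun r _ => ?_
  norm_cast
  ring_nf

lemma radialGaussMoment_pos (m : ℕ) : 0 < radialGaussMoment m := by
  rw [radialGaussMoment_eq_Gamma]
  have := Gamma_pos_of_pos (by positivity : (0 : ℝ) < ((m : ℝ) + 1) / 2)
  positivity

lemma radialGaussMoment_add_two (m : ℕ) :
    radialGaussMoment (m + 2) = (m + 1) * radialGaussMoment m := by
  have hexp : -(((m + 2 : ℕ) : ℝ) + 1) / 2 = -((m : ℝ) + 1) / 2 + -1 := by push_cast; ring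
  have harg : (((m + 2 : ℕ) : ℝ) + 1) / 2 = ((m : ℝ) + 1) / 2 + 1 := by push_cast; ring
  rw [radialGaussMoment_eq_Gamma, radialGaussMoment_eq_Gamma, hexp, harg,
    Gamma_add_one (by positivity), rpow_add (by norm_num), rpow_neg_one]
  ring

noncomputable def gaussMoment (m : ℕ) : ℝ := ∫ x : ℝ, x ^ m * exp (-(x ^ 2) / 2)

lemma gaussMoment_of_even {m : ℕ} (hm : Even m) :
    gaussMoment m = 2 * radialGaussMoment m := by
  rw [gaussMoment, radialGaussMoment,
    ← integral_comp_abs (f := fun x => x ^ m * exp (-(x ^ 2) / 2))]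
  simp only [hm.pow_abs, sq_abs]

lemma gaussMoment_of_odd {m : ℕ} (hm : Odd m) : gaussMoment m = 0 := by
  have h := integral_neg_eq_self (fun x : ℝ => x ^ m * exp (-(x ^ 2) / 2)) volume
  simp only [hm.neg_pow, neg_sq, neg_mul, integral_neg] at h
  rw [gaussMoment]
  linarith

lemma gaussMoment_succ (k : ℕ) : gaussMoment (k + 1) = k * gaussMoment (k - 1) := by
  rcases Nat.even_or_odd k with hk | hk
  · rw [gaussMoment_of_odd hk.add_one]
    rcases k.eq_zero_or_pos with rfl | hpos
    · simp
    · rw [gaussMoment_of_odd (Nat.Even.sub_odd hpos hk odd_one), mul_zero]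
  · obtain ⟨j, rfl⟩ := hk
    rw [show 2 * j + 1 + 1 = 2 * j + 2 by ring, Nat.add_sub_cancel,
      gaussMoment_of_even (by simp [parity_simps]), gaussMoment_of_even (by simp),
      radialGaussMoment_add_two]
    push_cast; ring

lemma integral_volumeIoiPow_pow_mul_gaussian (k d : ℕ) :
    ∫ r : Set.Ioi (0 : ℝ), (r : ℝ) ^ d * exp (-((r : ℝ) ^ 2) / 2) ∂(Measure.volumeIoiPow k)
      = radialGaussMoment (d + k) := by
  rw [Measure.volumeIoiPow, integral_withDensity_eq_integral_toReal_smul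
    (measurable_subtype_coe.pow_const k).ennreal_ofReal
    (Filter.Eventually.of_forall fun _ => ENNReal.ofReal_lt_top),
    integral_subtype_comap measurableSet_Ioi
      (fun r : ℝ => (ENNReal.ofReal (r ^ k)).toReal • (r ^ d * exp (-(r ^ 2) / 2))),
    radialGaussMoment]
  refine setIntegral_congr_fun measurableSet_Ioi fun r hr => ?_
  rw [ENNReal.toReal_ofReal (pow_nonneg (le_of_lt hr) _), smul_eq_mul, pow_add]
  ring

section Polar

variable {E : Type*} [NormedAddCommGroup E] [InnerProductSpace ℝ E] [FiniteDimensional ℝ E]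
  [MeasurableSpace E] [BorelSpace E] [Nontrivial E] (μ : Measure E) [μ.IsAddHaarMeasure]

lemma integral_mul_gaussian_eq_integral_sphere_mul {f : E → ℝ} {d : ℕ}
    (hf : ∀ r : ℝ, 0 < r → ∀ x, f (r • x) = r ^ d * f x) :
    ∫ x, f x * exp (-(‖x‖ ^ 2) / 2) ∂μ
      = (∫ ω : sphere (0 : E) 1, f ω ∂μ.toSphere)
          * radialGaussMoment (d + (Module.finrank ℝ E - 1)) := by
  set g : sphere (0 : E) 1 × Set.Ioi (0 : ℝ) → ℝ :=
    fun p => f p.1 * ((p.2 : ℝ) ^ d * exp (-((p.2 : ℝ) ^ 2) / 2))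
  have hpolar : ∀ x : ({0}ᶜ : Set E), f x * exp (-(‖(x : E)‖ ^ 2) / 2)
      = g (homeomorphUnitSphereProd E x) := by
    rintro ⟨x, hx⟩
    have hnorm : 0 < ‖x‖ := norm_pos_iff.2 hx
    have hfx : f x = ‖x‖ ^ d * f (‖x‖⁻¹ • x) := by
      conv_lhs => rw [← smul_inv_smul₀ hnorm.ne' x]
      rw [hf _ hnorm]
    simp only [g, homeomorphUnitSphereProd_apply_fst_coe, homeomorphUnitSphereProd_apply_snd_coe,
      hfx]
    ring
  calc ∫ x, f x * exp (-(‖x‖ ^ 2) / 2) ∂μ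
      = ∫ x : ({0}ᶜ : Set E), f x * exp (-(‖(x : E)‖ ^ 2) / 2) ∂(μ.comap (↑)) := by
        rw [integral_subtype_comap (measurableSet_singleton _).compl
          (fun x => f x * exp (-(‖x‖ ^ 2) / 2)), restrict_compl_singleton]
    _ = ∫ p, g p ∂(μ.toSphere.prod (Measure.volumeIoiPow (Module.finrank ℝ E - 1))) := by
        simp only [hpolar]
        exact (μ.measurePreserving_homeomorphUnitSphereProd).integral_comp
          (Homeomorph.measurableEmbedding _) g
    _ = _ := by
        rw [integral_prod_mul (fun ω : sphere (0 : E) 1 => f ω)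
          (fun r : Set.Ioi (0 : ℝ) => (r : ℝ) ^ d * exp (-((r : ℝ) ^ 2) / 2)),
          integral_volumeIoiPow_pow_mul_gaussian]

end Polar

variable {n : ℕ}

noncomputable def gaussMonomialMoment (s : Multiset (Fin n)) : ℝ :=
  ∫ x : EuclideanSpace ℝ (Fin n), (s.map (x ·)).prod * exp (-(‖x‖ ^ 2) / 2)

lemma gaussMonomialMoment_eq_prod (s : Multiset (Fin n)) :
    gaussMonomialMoment s = ∏ t, gaussMoment (s.count t) := by
  have hnorm : ∀ x : EuclideanSpace ℝ (Fin n), ‖x‖ ^ 2 = ∑ t, x t ^ 2 := fun x => by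
    simp [EuclideanSpace.norm_eq, sq_abs, Real.sq_sqrt (by positivity : (0:ℝ) ≤ ∑ t, x t ^ 2)]
  calc gaussMonomialMoment s
      = ∫ x : EuclideanSpace ℝ (Fin n),
          (fun y : Fin n → ℝ => ∏ t, (y t ^ s.count t * exp (-(y t ^ 2) / 2))) x := by
        refine integral_congr_ae (Filter.Eventually.of_forall fun x => ?_)
        simp only [hnorm, prod_mul_distrib, ← exp_sum, multiset_prod_map_eq_prod_pow_count,
          ← sum_neg_distrib, sum_div]
    _ = ∫ y : Fin n → ℝ, ∏ t, (y t ^ s.count t * exp (-(y t ^ 2) / 2)) :=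
        (EuclideanSpace.volume_preserving_symm_measurableEquiv_toLp (Fin n)).integral_comp'
          fun y : Fin n → ℝ => ∏ t, (y t ^ s.count t * exp (-(y t ^ 2) / 2))
    _ = ∏ t, gaussMoment (s.count t) :=
        integral_fintype_prod_eq_prod (fun t (v : ℝ) => v ^ s.count t * exp (-(v ^ 2) / 2))

lemma gaussMonomialMoment_cons_eq_count_mul (a : Fin n) (s : Multiset (Fin n)) :
    gaussMonomialMoment (a ::ₘ s) = s.count a * gaussMonomialMoment (s.erase a) := by
  simp only [gaussMonomialMoment_eq_prod, Fintype.prod_eq_mul_prod_compl a,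
    Multiset.count_cons_self, Multiset.count_erase_self, gaussMoment_succ]
  rw [mul_assoc]
  congr 2
  refine prod_congr rfl fun t ht => ?_
  have hta : t ≠ a := by simpa using ht
  rw [Multiset.count_cons_of_ne hta, Multiset.count_erase_of_ne hta]

lemma gaussMonomialMoment_cons (a : Fin n) (s : Multiset (Fin n)) :
    gaussMonomialMoment (a ::ₘ s)
      = (s.map fun b => if a = b then gaussMonomialMoment (s.erase b) else 0).sum := by
  have hmap : (s.map fun b => if a = b then gaussMonomialMoment (s.erase b) else 0)
      = s.map fun b => if a = b then gaussMonomialMoment (s.erase a) else 0 :=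
    Multiset.map_congr rfl fun b _ => by split_ifs with h <;> simp [h]
  rw [hmap, multiset_sum_map_ite_eq_count_mul, gaussMonomialMoment_cons_eq_count_mul]

lemma sum_mul_gaussMonomialMoment_six (N : Fin n) (P : Fin n → Fin n → ℝ) :
    ∑ k, ∑ i, ∑ l, ∑ j, P k i * P l j * gaussMonomialMoment {N, N, k, i, l, j}
      = ((∑ k, P k k) ^ 2 + ∑ k, ∑ i, P k i ^ 2 + ∑ k, ∑ i, P k i * P i k
          + 4 * P N N * ∑ k, P k k + 4 * ∑ k, P N k * P k N
          + 2 * ∑ k, P N k ^ 2 + 2 * ∑ k, P k N ^ 2)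
        * gaussMonomialMoment (0 : Multiset (Fin n)) := by
  simp only [Multiset.insert_eq_cons, gaussMonomialMoment_cons, Multiset.map_cons, ↓reduceIte,
    Multiset.erase_cons_head, Multiset.map_singleton, Multiset.erase_singleton,
    Multiset.sum_singleton, Multiset.mem_cons, Multiset.mem_singleton, true_or,
    Multiset.erase_cons_tail_of_mem, or_true, Multiset.cons_zero, Multiset.sum_cons, mul_add,
    mul_ite, mul_zero, sum_add_distrib, sum_ite_irrel, sum_ite_eq, mem_univ, sum_const_zero, add_mul]
  simp only [sq, sum_mul, mul_sum, ← sum_add_distrib]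
  refine sum_congr rfl fun k _ => ?_
  ring_nf
  congr 1
  exact sum_congr rfl fun i _ => by ring

lemma gaussMonomialMoment_zero_pos : 0 < gaussMonomialMoment (0 : Multiset (Fin n)) := by
  rw [gaussMonomialMoment_eq_prod]
  exact prod_pos fun t _ => by
    rw [Multiset.count_zero, gaussMoment_of_even ⟨0, rfl⟩]
    exact mul_pos two_pos (radialGaussMoment_pos 0)

lemma gaussMonomialMoment_eq_integral_sphere_mul [NeZero n] (s : Multiset (Fin n)) :
    gaussMonomialMoment s
      = (∫ ω, (s.map ((ω : EuclideanSpace ℝ (Fin n)) ·)).prod ∂sphereMeasure n)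
          * radialGaussMoment (Multiset.card s + (n - 1)) := by
  rw [gaussMonomialMoment, integral_mul_gaussian_eq_integral_sphere_mul,
    finrank_euclideanSpace_fin, sphereMeasure]
  intro r _ x
  simp only [PiLp.smul_apply, smul_eq_mul, Multiset.prod_map_mul, Multiset.map_const',
    Multiset.prod_replicate]

lemma gaussMonomialMoment_zero [NeZero n] :
    gaussMonomialMoment (0 : Multiset (Fin n)) = sphereArea n * radialGaussMoment (n - 1) := by
  simp [gaussMonomialMoment_eq_integral_sphere_mul, sphereArea, Measure.real]

lemma integral_sphere_monomial_of_card_eq_six [NeZero n] {s : Multiset (Fin n)}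
    (hs : Multiset.card s = 6) :
    ∫ ω, (s.map ((ω : EuclideanSpace ℝ (Fin n)) ·)).prod ∂sphereMeasure n
      = sphereArea n / (n * (n + 2) * (n + 4))
          * (gaussMonomialMoment s / gaussMonomialMoment (0 : Multiset (Fin n))) := by
  have hJ : radialGaussMoment (6 + (n - 1))
      = n * (n + 2) * (n + 4) * radialGaussMoment (n - 1) := by
    rw [show 6 + (n - 1) = n - 1 + 2 + 2 + 2 by omega, radialGaussMoment_add_two,
      radialGaussMoment_add_two, radialGaussMoment_add_two]
    push_cast [Nat.cast_sub (NeZero.one_le (n := n))]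
    ring
  have hG0 := (gaussMonomialMoment_zero_pos (n := n)).ne'
  rw [gaussMonomialMoment_zero] at hG0
  have hn : (n : ℝ) ≠ 0 := NeZero.ne _
  rw [gaussMonomialMoment_eq_integral_sphere_mul, gaussMonomialMoment_zero, hs, hJ]
  field_simp [left_ne_zero_of_mul hG0, right_ne_zero_of_mul hG0]

instance : IsFiniteMeasure (sphereMeasure n) := by
  unfold sphereMeasure
  infer_instance

@[fun_prop]
lemma integrable_sphere_monomial (s : Multiset (Fin n)) :
    Integrable (fun ω : sphere (0 : EuclideanSpace ℝ (Fin n)) 1 =>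
      (s.map ((ω : EuclideanSpace ℝ (Fin n)) ·)).prod) (sphereMeasure n) :=
  (continuous_multiset_prod s fun i _ =>
    (EuclideanSpace.proj i).continuous.comp continuous_subtype_val).integrable_of_hasCompactSupport
    (HasCompactSupport.of_compactSpace _)

lemma sq_mul_sq_sum_mul_inner_eq_sum_monomial (x : EuclideanSpace ℝ (Fin n))
    (P : Fin n → EuclideanSpace ℝ (Fin n)) (N : Fin n) :
    x N ^ 2 * (∑ k, x k * inner ℝ x (P k)) ^ 2
      = ∑ k, ∑ i, ∑ l, ∑ j,
          P k i * P l j * (({N, N, k, i, l, j} : Multiset (Fin n)).map (x ·)).prod := by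
  have hq : ∑ k, x k * inner ℝ x (P k) = ∑ k, ∑ i, P k i * (x k * x i) := by
    simp only [PiLp.inner_apply, mul_sum]
    exact sum_congr rfl fun k _ => sum_congr rfl fun i _ => by
      rw [RCLike.inner_apply, conj_trivial]; ring
  rw [hq, sq (∑ k, _), mul_sum]
  simp only [sum_mul, mul_sum]
  simp only [Multiset.insert_eq_cons, Multiset.map_cons, Multiset.prod_cons,
    Multiset.map_singleton, Multiset.prod_singleton]
  exact sum_congr rfl fun k _ => sum_congr rfl fun i _ => sum_congr rfl fun l _ =>
    sum_congr rfl fun j _ => by ring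

lemma sum_contractions_eq_sum_filter_ne (N : Fin n) (P : Fin n → Fin n → ℝ) :
    (∑ k, P k k) ^ 2 + ∑ k, ∑ i, P k i ^ 2 + ∑ k, ∑ i, P k i * P i k
        + 4 * P N N * ∑ k, P k k + 4 * ∑ k, P N k * P k N
        + 2 * ∑ k, P N k ^ 2 + 2 * ∑ k, P k N ^ 2
      = 15 * (P N N) ^ 2
        + ∑ k ∈ univ.filter (fun k => k ≠ N),
            (3 * (P N k) ^ 2 + 3 * (P k N) ^ 2 + 2 * (P k k) ^ 2)
        + (∑ k ∈ univ.filter (fun k => k ≠ N), P k k) ^ 2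
        + 6 * ∑ k ∈ univ.filter (fun k => k ≠ N), (P N N * P k k + P N k * P k N)
        + ∑ k ∈ univ.filter (fun k => k ≠ N),
            ∑ ℓ ∈ univ.filter (fun ℓ => k < ℓ ∧ ℓ ≠ N), (P k ℓ + P ℓ k) ^ 2 := by
  have hfilter : ∀ k : Fin n,
      univ.filter (fun ℓ => k < ℓ ∧ ℓ ≠ N) = (univ.erase N).filter (k < ·) :=
    fun k => by ext; simp [and_comm]
  simp only [hfilter, filter_ne', ← add_sum_erase univ _ (mem_univ N)]
  set s := univ.erase N
  have hoff : ∑ k ∈ s, ∑ i ∈ s, P k i ^ 2 + ∑ k ∈ s, ∑ i ∈ s, P k i * P i k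
      = 2 * ∑ k ∈ s, P k k ^ 2 + ∑ k ∈ s, ∑ i ∈ s with k < i, (P k i + P i k) ^ 2 := by
    simp only [← sum_add_distrib]
    rw [sum_sum_eq_sum_diag_add_sum_lt, mul_sum]
    congr 1
    · exact sum_congr rfl fun k _ => by ring
    · exact sum_congr rfl fun k _ => sum_congr rfl fun i _ => by ring
  have hcomm : ∑ k ∈ s, P k N * P N k = ∑ k ∈ s, P N k * P k N :=
    sum_congr rfl fun k _ => mul_comm _ _
  simp only [sum_add_distrib, ← mul_sum]
  linear_combination hoff + hcomm

theorem sphere_integral_K3_general (n : ℕ)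
    (P : Fin n → EuclideanSpace ℝ (Fin n)) (N : Fin n) :
    (∫ ω : sphere (0 : EuclideanSpace ℝ (Fin n)) 1,
        ((ω : EuclideanSpace ℝ (Fin n)) N) ^ 2 *
          (∑ k, ((ω : EuclideanSpace ℝ (Fin n)) k) *
            (inner ℝ (ω : EuclideanSpace ℝ (Fin n)) (P k) : ℝ)) ^ 2
      ∂(sphereMeasure n))
    = sphereArea n / (n * (n + 2) * (n + 4)) *
      (15 * (P N N) ^ 2
        + ∑ k ∈ univ.filter (fun k => k ≠ N),
            (3 * (P N k) ^ 2 + 3 * (P k N) ^ 2 + 2 * (P k k) ^ 2)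
        + (∑ k ∈ univ.filter (fun k => k ≠ N), P k k) ^ 2
        + 6 * ∑ k ∈ univ.filter (fun k => k ≠ N), (P N N * P k k + P N k * P k N)
        + ∑ k ∈ univ.filter (fun k => k ≠ N),
            ∑ ℓ ∈ univ.filter (fun ℓ => k < ℓ ∧ ℓ ≠ N), (P k ℓ + P ℓ k) ^ 2) := by
  have : NeZero n := ⟨N.pos.ne'⟩
  have hG0 := (gaussMonomialMoment_zero_pos (n := n)).ne'
  simp_rw [sq_mul_sq_sum_mul_inner_eq_sum_monomial]
  simp (disch := fun_prop) only [integral_finsetSum, integral_const_mul]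
  simp (disch := simp) only [integral_sphere_monomial_of_card_eq_six,
    mul_left_comm _ (sphereArea n / _), ← mul_sum, mul_div_assoc', ← sum_div]
  rw [sum_mul_gaussMonomialMoment_six N fun k i => P k i, mul_div_assoc,
    mul_div_cancel_right₀ _ hG0, sum_contractions_eq_sum_filter_ne]

/-- The value of `K₃ = ∫_{𝕊^{n-1}} ω_N² (Σₖ ωₖ (ω·Pₖ))² dω` for `n ≥ 3`. -/
theorem sphere_integral_K3 (n : ℕ) (hn : 3 ≤ n)
    (P : Fin n → EuclideanSpace ℝ (Fin n)) (N : Fin n) :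
    (∫ ω : sphere (0 : EuclideanSpace ℝ (Fin n)) 1,
        ((ω : EuclideanSpace ℝ (Fin n)) N) ^ 2 *
          (∑ k, ((ω : EuclideanSpace ℝ (Fin n)) k) *
            (inner ℝ (ω : EuclideanSpace ℝ (Fin n)) (P k) : ℝ)) ^ 2
      ∂(sphereMeasure n))
    = sphereArea n / (n * (n + 2) * (n + 4)) *
      (15 * (P N N) ^ 2
        + ∑ k ∈ univ.filter (fun k => k ≠ N),
            (3 * (P N k) ^ 2 + 3 * (P k N) ^ 2 + 2 * (P k k) ^ 2)
        + (∑ k ∈ univ.filter (fun k => k ≠ N), P k k) ^ 2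
        + 6 * ∑ k ∈ univ.filter (fun k => k ≠ N), (P N N * P k k + P N k * P k N)
        + ∑ k ∈ univ.filter (fun k => k ≠ N),
            ∑ ℓ ∈ univ.filter (fun ℓ => k < ℓ ∧ ℓ ≠ N), (P k ℓ + P ℓ k) ^ 2) :=
  sphere_integral_K3_general n P N
end
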